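/- Let φ_1,…,φ_r be symmetric polynomials of the shape φ_j(z) = a_j σ_{k_j}(z) − Σ_{l < k_j, l ∈ R} b_{jl} σ_l(z) with a_j nonzero integers and b_{jl} integers, with degrees k_1,…,k_r satisfying 1 ≤ k_1 < k_2 < … < k_r = k. Let T_k^*(X;φ) denote the number of pairs (x,y) with 1 ≤ x_i, y_i ≤ X satisfying φ_j(x) = φ_j(y) (1 ≤ j ≤ r), for which {x_1,…,x_k} = {y_1,…,y_k} as sets but (y_1,…,y_k) is not a permutation of (x_1,…,x_k). Then for each ε > 0, T_k^*(X;φ) ≪ X^{w(φ)+ε}. -/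

import Mathlib

open Finset Asymptotics Filter

/-- The elementary symmetric polynomial `σ_l` evaluated at the integer tuple `x`. -/
def esymm (k l : ℕ) (x : Fin k → ℤ) : ℤ :=
  ∑ s ∈ Finset.powersetCard l (Finset.univ : Finset (Fin k)), ∏ i ∈ s, x i

/-- The number of pairs `(x, y)` of integer `k`-tuples with all entries in `[1, X]`
satisfying the relation `P`. -/
noncomputable def pairCount (k X : ℕ) (P : (Fin k → ℤ) → (Fin k → ℤ) → Prop) : ℕ :=
  Nat.card {p : (Fin k → ℤ) × (Fin k → ℤ) //
    (∀ i, 1 ≤ p.1 i ∧ p.1 i ≤ (X : ℤ)) ∧ (∀ i, 1 ≤ p.2 i ∧ p.2 i ≤ (X : ℤ)) ∧ P p.1 p.2}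

/-- `T_k(X)`: the number of pairs `(x, y)` of integer `k`-tuples with entries in `[1, X]`
for which `y` is a permutation of `x`. -/
noncomputable def permCount (k X : ℕ) : ℕ :=
  pairCount k X (fun x y => ∃ π : Equiv.Perm (Fin k), y = x ∘ π)

/-- The complementary set of exponents `ℛ = {1,…,k} \ {k_1,…,k_r}`. -/
def compSet (k r : ℕ) (kk : Fin r → ℕ) : Finset ℕ :=
  Finset.Icc 1 k \ Finset.image kk Finset.univ

/-! If `{x_i} = {y_i}` as sets but `y` is not a permutation of `x`, then
`D = ∏ (t - x_i) - ∏ (t - y_i)` is a nonzero polynomial of degree at most `k` vanishing at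
every `x_i` and `y_i`, so `D` leaves at most `k^{2k}` possibilities for `(x, y)`. The
coefficients of `D` are `± (σ_l(x) - σ_l(y))`, and since `a_j ≠ 0` the equations
`φ_j(x) = φ_j(y)` express the differences with `l = k_j` through those with `l ∈ R`.
Hence `D` is determined by the differences `σ_l(x) - σ_l(y) = O(X^l)` with `l ∈ R`, and
`T_k^*(X; φ) ≪ X^{Σ_{l ∈ R} l} = X^{w(φ)}`. -/

open Polynomial

lemma esymm_eq_esymm_map_univ {k : ℕ} (l : ℕ) (x : Fin k → ℤ) :
    esymm k l x = (univ.val.map x).esymm l :=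
  (Finset.esymm_map_val x univ l).symm

lemma esymm_zero {k : ℕ} (x : Fin k → ℤ) : esymm k 0 x = 1 := by simp [esymm]

lemma esymm_mem_Icc {k N : ℕ} (l : ℕ) {x : Fin k → ℤ} (hx : ∀ i, 0 ≤ x i ∧ x i ≤ N) :
    esymm k l x ∈ Icc 0 (k.choose l * (N : ℤ) ^ l) := by
  refine mem_Icc.2 ⟨sum_nonneg fun s _ => prod_nonneg fun i _ => (hx i).1, ?_⟩
  calc esymm k l x ≤ ∑ _s ∈ powersetCard l (univ : Finset (Fin k)), (N : ℤ) ^ l := by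
        refine sum_le_sum fun s hs => ?_
        rw [← (mem_powersetCard.1 hs).2, ← prod_const]
        exact prod_le_prod (fun i _ => (hx i).1) fun i _ => (hx i).2
    _ = k.choose l * (N : ℤ) ^ l := by simp

lemma exists_perm_of_map_univ_val_eq {α β : Type*} [Fintype α] [DecidableEq β] {x y : α → β}
    (h : univ.val.map x = univ.val.map y) : ∃ π : Equiv.Perm α, y = x ∘ π := by
  have hfiber : ∀ c, Fintype.card {i // y i = c} = Fintype.card {i // x i = c} := by
    intro c
    simpa [Multiset.count_map, Fintype.card_subtype, Finset.card, eq_comm] using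
      (congrArg (Multiset.count c) h).symm
  exact ⟨Equiv.ofFiberEquiv fun c => Fintype.equivOfCardEq (hfiber c),
    funext fun i => (Equiv.ofFiberEquiv_map _ i).symm⟩

/-- The paper's `∏ (t + z_i)` up to `t ↦ -t`; this sign makes the `x i` themselves the roots. -/
noncomputable def prodXSubC {k : ℕ} (x : Fin k → ℤ) : ℤ[X] :=
  ∏ i, (X - C (x i))

lemma prodXSubC_eq_multiset_prod {k : ℕ} (x : Fin k → ℤ) :
    prodXSubC x = ((univ.val.map x).map fun t => X - C t).prod := by
  rw [prodXSubC, prod_eq_multiset_prod, Multiset.map_map]; rfl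

lemma prodXSubC_eq_sum {k : ℕ} (x : Fin k → ℤ) :
    prodXSubC x = ∑ l ∈ range (k + 1), (-1) ^ l * (C (esymm k l x) * X ^ (k - l)) := by
  rw [prodXSubC_eq_multiset_prod, Multiset.prod_X_sub_X_eq_sum_esymm]
  simp [esymm_eq_esymm_map_univ]

lemma roots_prodXSubC {k : ℕ} (x : Fin k → ℤ) : (prodXSubC x).roots = univ.val.map x := by
  rw [prodXSubC_eq_multiset_prod, roots_multiset_prod_X_sub_C]

lemma natDegree_prodXSubC {k : ℕ} (x : Fin k → ℤ) : (prodXSubC x).natDegree = k := by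
  rw [prodXSubC_eq_multiset_prod, natDegree_multiset_prod_X_sub_C_eq_card]; simp

lemma exists_perm_of_prodXSubC_eq {k : ℕ} {x y : Fin k → ℤ} (h : prodXSubC x = prodXSubC y) :
    ∃ π : Equiv.Perm (Fin k), y = x ∘ π :=
  exists_perm_of_map_univ_val_eq (by rw [← roots_prodXSubC, h, roots_prodXSubC])

lemma natDegree_prodXSubC_sub_le {k : ℕ} (x y : Fin k → ℤ) :
    (prodXSubC x - prodXSubC y).natDegree ≤ k :=
  (natDegree_sub_le _ _).trans (by simp [natDegree_prodXSubC])

lemma mem_roots_prodXSubC_sub {k : ℕ} {x y : Fin k → ℤ} (hne : prodXSubC x - prodXSubC y ≠ 0)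
    (hrange : Set.range x = Set.range y) {z : ℤ} (hz : z ∈ Set.range x) :
    z ∈ (prodXSubC x - prodXSubC y).roots := by
  have hroot : ∀ {w : Fin k → ℤ}, z ∈ Set.range w → (prodXSubC w).IsRoot z := fun hw =>
    isRoot_of_mem_roots (by simpa [roots_prodXSubC] using hw)
  rw [mem_roots hne, IsRoot, eval_sub, hroot hz, hroot (hrange ▸ hz), sub_zero]

lemma prodXSubC_sub_eq_of_esymm_sub_eq {k : ℕ} {x y x' y' : Fin k → ℤ}
    (h : ∀ l ∈ Icc 1 k, esymm k l x - esymm k l y = esymm k l x' - esymm k l y') :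
    prodXSubC x - prodXSubC y = prodXSubC x' - prodXSubC y' := by
  simp only [prodXSubC_eq_sum, ← sum_sub_distrib, ← mul_sub, ← sub_mul, ← C_sub]
  refine sum_congr rfl fun l hl => ?_
  rcases Nat.eq_zero_or_pos l with rfl | hl0
  · simp [esymm_zero]
  · rw [h l (mem_Icc.2 ⟨hl0, Nat.lt_succ_iff.1 (mem_range.1 hl)⟩)]

lemma card_piFinset_roots_le {k : ℕ} (D : ℤ[X]) :
    #(Fintype.piFinset fun _ : Fin k => D.roots.toFinset) ≤ D.natDegree ^ k := by
  rw [Fintype.card_piFinset, prod_const, card_univ, Fintype.card_fin]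
  exact Nat.pow_le_pow_left ((Multiset.toFinset_card_le _).trans (card_roots' D)) k

lemma card_Icc_neg_mul_pow_le (c l : ℕ) {N : ℕ} (hN : 1 ≤ N) :
    #(Icc (-(c * N ^ l : ℤ)) (c * N ^ l)) ≤ (2 * c + 1) * N ^ l := by
  rw [Int.card_Icc, Int.toNat_le]
  have : (1 : ℤ) ≤ (N : ℤ) ^ l := one_le_pow₀ (by exact_mod_cast hN)
  push_cast
  nlinarith

lemma card_piFinset_Icc_neg_mul_pow_le (R : Finset ℕ) (c : ℕ → ℕ) {N : ℕ} (hN : 1 ≤ N) :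
    #(Fintype.piFinset fun l : R => Icc (-(c l * N ^ (l : ℕ) : ℤ)) (c l * N ^ (l : ℕ))) ≤
      (∏ l ∈ R, (2 * c l + 1)) * N ^ ∑ l ∈ R, l := by
  calc _ = ∏ l : R, #(Icc (-(c l * N ^ (l : ℕ) : ℤ)) (c l * N ^ (l : ℕ))) :=
        Fintype.card_piFinset _
    _ ≤ ∏ l : R, (2 * c l + 1) * N ^ (l : ℕ) :=
        prod_le_prod' fun l _ => card_Icc_neg_mul_pow_le _ _ hN
    _ = (∏ l ∈ R, (2 * c l + 1)) * N ^ ∑ l ∈ R, l := by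
        rw [prod_mul_distrib, prod_pow_eq_pow_sum, prod_coe_sort R (fun l => 2 * c l + 1),
          sum_coe_sort R (fun l => l)]

open Classical in
noncomputable def pairFinset (k N : ℕ) (P : (Fin k → ℤ) → (Fin k → ℤ) → Prop) :
    Finset ((Fin k → ℤ) × (Fin k → ℤ)) :=
  {p ∈ (Fintype.piFinset fun _ => Icc 1 (N : ℤ)) ×ˢ (Fintype.piFinset fun _ => Icc 1 (N : ℤ)) |
    P p.1 p.2}

lemma mem_pairFinset {k N : ℕ} {P : (Fin k → ℤ) → (Fin k → ℤ) → Prop}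
    {p : (Fin k → ℤ) × (Fin k → ℤ)} :
    p ∈ pairFinset k N P ↔
      (∀ i, 1 ≤ p.1 i ∧ p.1 i ≤ (N : ℤ)) ∧ (∀ i, 1 ≤ p.2 i ∧ p.2 i ≤ (N : ℤ)) ∧ P p.1 p.2 := by
  simp [pairFinset, and_assoc]

lemma pairCount_eq_card_pairFinset (k N : ℕ) (P : (Fin k → ℤ) → (Fin k → ℤ) → Prop) :
    pairCount k N P = #(pairFinset k N P) := by
  rw [pairCount, ← Nat.card_eq_finsetCard]
  exact Nat.card_congr (Equiv.subtypeEquivRight fun _ => mem_pairFinset.symm)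

lemma mem_piFinset_roots_of_range_eq {k : ℕ} {x y : Fin k → ℤ}
    (hrange : Set.range x = Set.range y) (hperm : ¬ ∃ π : Equiv.Perm (Fin k), y = x ∘ π) :
    (x, y) ∈ (Fintype.piFinset fun _ => (prodXSubC x - prodXSubC y).roots.toFinset) ×ˢ
      (Fintype.piFinset fun _ => (prodXSubC x - prodXSubC y).roots.toFinset) := by
  have hne : prodXSubC x - prodXSubC y ≠ 0 := fun h =>
    hperm (exists_perm_of_prodXSubC_eq (sub_eq_zero.1 h))
  simp only [mem_product, Fintype.mem_piFinset, Multiset.mem_toFinset]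
  exact ⟨fun i => mem_roots_prodXSubC_sub hne hrange ⟨i, rfl⟩,
    fun i => mem_roots_prodXSubC_sub hne hrange (hrange ▸ ⟨i, rfl⟩)⟩

lemma sum_Icc_one_mul_two (k : ℕ) : (∑ l ∈ Icc 1 k, l) * 2 = k * (k + 1) := by
  have := sum_range_id_mul_two (k + 1)
  rw [range_eq_Ico, sum_eq_sum_Ico_succ_bot (Nat.succ_pos k)] at this
  simpa [Ico_add_one_right_eq_Icc, Nat.mul_comm] using this

lemma Monotone.mem_Icc_one {r k : ℕ} {kk : Fin r → ℕ} (hmono : Monotone kk) (hr : 0 < r)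
    (hfirst : 1 ≤ kk ⟨0, hr⟩) (hlast : kk ⟨r - 1, Nat.sub_lt hr Nat.one_pos⟩ = k) (j : Fin r) :
    kk j ∈ Icc 1 k :=
  mem_Icc.2 ⟨hfirst.trans (hmono (Fin.le_def.2 (Nat.zero_le _))),
    hlast ▸ hmono (Fin.le_def.2 (Nat.le_sub_one_of_lt j.2))⟩

lemma cast_sum_compSet {r k : ℕ} {kk : Fin r → ℕ} (hinj : Function.Injective kk)
    (hkk : ∀ j, kk j ∈ Icc 1 k) :
    ((∑ l ∈ compSet k r kk, l : ℕ) : ℝ) = (k * (k + 1) : ℝ) / 2 - ∑ j, (kk j : ℝ) := by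
  have hsplit : (∑ l ∈ compSet k r kk, l) + ∑ j, kk j = ∑ l ∈ Icc 1 k, l := by
    have := sum_sdiff (f := id) (image_subset_iff.2 fun j (_ : j ∈ univ) => hkk j)
    rwa [sum_image fun i _ j _ h => hinj h] at this
  have hsplit' := congrArg (Nat.cast : ℕ → ℝ) hsplit
  have hgauss := congrArg (Nat.cast : ℕ → ℝ) (sum_Icc_one_mul_two k)
  push_cast at hsplit' hgauss ⊢
  linarith

def PotentiallyDiagonal {ι : Type*} {k : ℕ} (φ : ι → (Fin k → ℤ) → ℤ) (x y : Fin k → ℤ) :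
    Prop :=
  (∀ j, φ j x = φ j y) ∧ Set.range x = Set.range y ∧ ¬ ∃ π : Equiv.Perm (Fin k), y = x ∘ π

section Phi

variable {k r : ℕ} {kk : Fin r → ℕ} {a : Fin r → ℤ} {b : Fin r → ℕ → ℤ}
  {φ : Fin r → (Fin k → ℤ) → ℤ}

lemma mul_esymm_sub_eq_of_phi_eq
    (hφ : ∀ j z, φ j z =
      a j * esymm k (kk j) z
        - ∑ l ∈ (compSet k r kk).filter (fun l => l < kk j), b j l * esymm k l z)
    {x y : Fin k → ℤ} {j : Fin r} (h : φ j x = φ j y) :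
    a j * (esymm k (kk j) x - esymm k (kk j) y) =
      ∑ l ∈ (compSet k r kk).filter (fun l => l < kk j), b j l * (esymm k l x - esymm k l y) := by
  rw [hφ, hφ] at h
  simp only [mul_sub, sum_sub_distrib]
  linarith

lemma esymm_sub_eq_of_phi_eq
    (hφ : ∀ j z, φ j z =
      a j * esymm k (kk j) z
        - ∑ l ∈ (compSet k r kk).filter (fun l => l < kk j), b j l * esymm k l z)
    (ha : ∀ j, a j ≠ 0) {x y x' y' : Fin k → ℤ}
    (hxy : ∀ j, φ j x = φ j y) (hx'y' : ∀ j, φ j x' = φ j y')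
    (hcomp : ∀ l ∈ compSet k r kk,
      esymm k l x - esymm k l y = esymm k l x' - esymm k l y')
    (l : ℕ) (hl : l ∈ Icc 1 k) :
    esymm k l x - esymm k l y = esymm k l x' - esymm k l y' := by
  by_cases hlR : l ∈ compSet k r kk
  · exact hcomp l hlR
  obtain ⟨j, -, rfl⟩ := mem_image.1 (not_not.1 fun h => hlR (mem_sdiff.2 ⟨hl, h⟩))
  refine mul_left_cancel₀ (ha j) ?_
  rw [mul_esymm_sub_eq_of_phi_eq hφ (hxy j), mul_esymm_sub_eq_of_phi_eq hφ (hx'y' j)]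
  exact sum_congr rfl fun l hl => by rw [hcomp l (mem_filter.1 hl).1]

lemma PotentiallyDiagonal.mem_piFinset_roots
    (hφ : ∀ j z, φ j z =
      a j * esymm k (kk j) z
        - ∑ l ∈ (compSet k r kk).filter (fun l => l < kk j), b j l * esymm k l z)
    (ha : ∀ j, a j ≠ 0) {x y x' y' : Fin k → ℤ} (h : PotentiallyDiagonal φ x y)
    (h' : PotentiallyDiagonal φ x' y')
    (hcomp : ∀ l ∈ compSet k r kk,
      esymm k l x - esymm k l y = esymm k l x' - esymm k l y') :
    (x, y) ∈ (Fintype.piFinset fun _ => (prodXSubC x' - prodXSubC y').roots.toFinset) ×ˢ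
      (Fintype.piFinset fun _ => (prodXSubC x' - prodXSubC y').roots.toFinset) := by
  obtain ⟨hxy, hrange, hperm⟩ := h
  rw [← prodXSubC_sub_eq_of_esymm_sub_eq (esymm_sub_eq_of_phi_eq hφ ha hxy h'.1 hcomp)]
  exact mem_piFinset_roots_of_range_eq hrange hperm

theorem pairCount_potentiallyDiagonal_le
    (hφ : ∀ j z, φ j z =
      a j * esymm k (kk j) z
        - ∑ l ∈ (compSet k r kk).filter (fun l => l < kk j), b j l * esymm k l z)
    (ha : ∀ j, a j ≠ 0) {N : ℕ} (hN : 1 ≤ N) :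
    pairCount k N (PotentiallyDiagonal φ) ≤
      k ^ k * k ^ k *
        ((∏ l ∈ compSet k r kk, (2 * k.choose l + 1)) * N ^ ∑ l ∈ compSet k r kk, l) := by
  classical
  set R := compSet k r kk
  set v : (Fin k → ℤ) × (Fin k → ℤ) → R → ℤ := fun p l => esymm k l p.1 - esymm k l p.2
  set T := Fintype.piFinset fun l : R =>
    Icc (-(k.choose l * N ^ (l : ℕ) : ℤ)) (k.choose l * N ^ (l : ℕ))
  rw [pairCount_eq_card_pairFinset]
  refine (card_le_mul_card_image_of_maps_to (f := v) (t := T) ?_ (k ^ k * k ^ k) ?_).trans ?_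
  · intro p hp
    obtain ⟨hx, hy, -⟩ := mem_pairFinset.1 hp
    refine Fintype.mem_piFinset.2 fun l => ?_
    have hxl := mem_Icc.1 (esymm_mem_Icc l fun i => ⟨zero_le_one.trans (hx i).1, (hx i).2⟩)
    have hyl := mem_Icc.1 (esymm_mem_Icc l fun i => ⟨zero_le_one.trans (hy i).1, (hy i).2⟩)
    exact mem_Icc.2 ⟨by linarith, by linarith⟩
  · intro c _
    rcases ({p ∈ pairFinset k N (PotentiallyDiagonal φ) | v p = c}).eq_empty_or_nonempty
      with hempty | ⟨p₀, hp₀⟩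
    · simp [hempty]
    set D := prodXSubC p₀.1 - prodXSubC p₀.2
    have hfiber : {p ∈ pairFinset k N (PotentiallyDiagonal φ) | v p = c} ⊆
        (Fintype.piFinset fun _ => D.roots.toFinset) ×ˢ
          (Fintype.piFinset fun _ => D.roots.toFinset) := by
      intro p hp
      obtain ⟨hp, hvp⟩ := mem_filter.1 hp
      obtain ⟨hp₀, hvp₀⟩ := mem_filter.1 hp₀
      exact (mem_pairFinset.1 hp).2.2.mem_piFinset_roots hφ ha (mem_pairFinset.1 hp₀).2.2
        fun l hl => congrFun (hvp.trans hvp₀.symm) ⟨l, hl⟩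
    calc _ ≤ _ := card_le_card hfiber
      _ ≤ D.natDegree ^ k * D.natDegree ^ k := by
        rw [card_product]
        exact Nat.mul_le_mul (card_piFinset_roots_le D) (card_piFinset_roots_le D)
      _ ≤ k ^ k * k ^ k := by
        have := natDegree_prodXSubC_sub_le p₀.1 p₀.2
        gcongr
  · exact Nat.mul_le_mul_left _ (card_piFinset_Icc_neg_mul_pow_le _ _ hN)

end Phi

/-- The bound (2.10). With `φ_j(z) = a_j σ_{k_j}(z) − Σ_{l < k_j, l ∈ ℛ} b_{jl} σ_l(z)`,
the number `T_k^*(X;φ)` of pairs `(x,y)` with `1 ≤ x_i, y_i ≤ X` satisfying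
`φ_j(x) = φ_j(y)` for all `j`, with `{x_1,…,x_k} = {y_1,…,y_k}` as sets but `y` not a
permutation of `x`, satisfies `T_k^*(X;φ) ≪ X^{w(φ)+ε}`. -/
theorem potentially_diagonal_bound (k r : ℕ) (hr : 0 < r) (kk : Fin r → ℕ)
    (hmono : StrictMono kk) (hfirst : 1 ≤ kk ⟨0, hr⟩)
    (hlast : kk ⟨r - 1, Nat.sub_lt hr Nat.one_pos⟩ = k)
    (a : Fin r → ℤ) (ha : ∀ j, a j ≠ 0) (b : Fin r → ℕ → ℤ)
    (φ : Fin r → (Fin k → ℤ) → ℤ)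
    (hφ : ∀ j z, φ j z =
      a j * esymm k (kk j) z
        - ∑ l ∈ (compSet k r kk).filter (fun l => l < kk j), b j l * esymm k l z)
    (ε : ℝ) (hε : 0 < ε) :
    (fun X : ℕ =>
        (pairCount k X (fun x y => (∀ j, φ j x = φ j y) ∧ Set.range x = Set.range y ∧
          ¬ ∃ π : Equiv.Perm (Fin k), y = x ∘ π) : ℝ))
      =O[atTop]
      fun X : ℕ => (X : ℝ) ^ ((k * (k + 1) : ℝ) / 2 - (∑ j, (kk j : ℝ)) + ε) := by
  have hw := cast_sum_compSet hmono.injective (hmono.monotone.mem_Icc_one hr hfirst hlast)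
  set w := ∑ l ∈ compSet k r kk, l
  set C := k ^ k * k ^ k * ∏ l ∈ compSet k r kk, (2 * k.choose l + 1)
  refine IsBigO.of_bound C ?_
  filter_upwards [eventually_ge_atTop 1] with N hN
  have hN' : (1 : ℝ) ≤ N := by exact_mod_cast hN
  rw [Real.norm_natCast, Real.norm_of_nonneg (by positivity), ← hw]
  calc (pairCount k N (PotentiallyDiagonal φ) : ℝ) ≤ ((C * N ^ w : ℕ) : ℝ) := by
        rw [mul_assoc]; exact_mod_cast pairCount_potentiallyDiagonal_le hφ ha hN
    _ = C * (N : ℝ) ^ (w : ℝ) := by push_cast; rw [Real.rpow_natCast]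
    _ ≤ C * (N : ℝ) ^ ((w : ℝ) + ε) := by gcongr; linarith
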